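/- For every δ > 0 and A > 0 there exists a constant R₃ = R₃(δ,A) > 0 such that for every integer N ≥ 1, every u ∈ [−2,2], every t₁, t₂ ∈ [−A,A], and every H ∈ ℝ satisfying |Im( (u+t_i/N)·d(H) )| ≥ δ for both i = 1 and i = 2, one has | N^{−1}·K̃_N( (u+t₁/N)·d(H), (u+t₂/N)·d(H), 1/N ) | ≤ (N−1)!·R₃^{2N}·H^{2N}. -/

import Mathlib

set_option maxHeartbeats 1000000


open Real

noncomputable section

/-- The monic (probabilists') Hermite polynomial, evaluated at a complex number. -/
def hermiteH (k : ℕ) (z : ℂ) : ℂ := Polynomial.aeval z (Polynomial.hermite k)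

/-- The normalized Hermite polynomial `p_k = H_k / ((2π)^{1/4} (k!)^{1/2})`. -/
def hermiteP (k : ℕ) (z : ℂ) : ℂ :=
  hermiteH k z / (((2 * π) ^ ((1:ℝ)/4) * Real.sqrt (Nat.factorial k) : ℝ) : ℂ)

/-- The Hermite function `φ_k(z) = p_k(z) exp(−z²/4)`. -/
def hermitePhi (k : ℕ) (z : ℂ) : ℂ := hermiteP k z * Complex.exp (-(z ^ 2) / 4)

/-- The Hermite reproducing kernel `K_N(z₁,z₂) = Σ_{k<N} φ_k(z₁) φ_k(z₂)`. -/
def kernelK (N : ℕ) (z₁ z₂ : ℂ) : ℂ :=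
  ∑ k ∈ Finset.range N, hermitePhi k z₁ * hermitePhi k z₂

/-- The rescaled kernel `K̃_N(z₁,z₂,s) = s^{−1/2} K_N(z₁ s^{−1/2}, z₂ s^{−1/2})`
(principal powers). -/
def kernelKt (N : ℕ) (z₁ z₂ s : ℂ) : ℂ :=
  s ^ (-(1:ℂ)/2) * kernelK N (z₁ * s ^ (-(1:ℂ)/2)) (z₂ * s ^ (-(1:ℂ)/2))

/-- `d(H) = √(1+iH)`, the principal square root. -/
def dC (H : ℝ) : ℂ := (1 + H * Complex.I) ^ ((1:ℂ)/2)

/-- The closed strip `S̄_{α,β} = {z : |Re z| ≤ 2−α, |Im z| ≤ β}`. -/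
def Sbar (α β : ℝ) : Set ℂ := {z : ℂ | |z.re| ≤ 2 - α ∧ |z.im| ≤ β}

/-- The Wigner semicircle density. -/
def wigner (x : ℝ) : ℝ := (2 * π)⁻¹ * Real.sqrt (4 - x ^ 2)

/-- The analytic continuation of the Wigner density,
`w(z) = (2π)⁻¹ (2−z)^{1/2} (2+z)^{1/2}` (principal powers). -/
def wignerC (z : ℂ) : ℂ :=
  (((2 * π)⁻¹ : ℝ) : ℂ) * ((2 - z) ^ ((1:ℂ)/2) * (2 + z) ^ ((1:ℂ)/2))

/-! ### Auxiliary lemmas -/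

open Polynomial in
theorem deriv_hermite' (n : ℕ) :
    derivative (hermite (n+1)) = (n+1 : ℤ[X]) * hermite n := by
  induction n with
  | zero => simp [hermite_one, hermite_zero]
  | succ n ih =>
    rw [hermite_succ (n+1), derivative_sub, derivative_mul, derivative_X, ih]
    rw [derivative_mul, hermite_succ n]
    simp only [derivative_add, derivative_one, derivative_natCast, add_zero, zero_add]
    push_cast
    ring

open Polynomial in
theorem hermiteH_rec' (n : ℕ) (z : ℂ) :
    hermiteH (n+2) z = z * hermiteH (n+1) z - (n+1 : ℂ) * hermiteH n z := by
  unfold hermiteH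
  rw [hermite_succ (n+1), map_sub, map_mul, aeval_X, deriv_hermite', map_mul]
  simp only [map_add, map_one, map_natCast]

theorem hermiteH_bound' (k : ℕ) (z : ℂ) :
    ‖hermiteH k z‖ ≤ (‖z‖ + k) ^ k := by
  induction k using Nat.strong_induction_on with
  | _ k ih =>
    match k with
    | 0 => simp [hermiteH, Polynomial.hermite_zero]
    | 1 => simp [hermiteH, Polynomial.hermite_one]
    | (n+2) =>
      have h1 := ih (n+1) (by omega)
      have h0 := ih n (by omega)
      rw [hermiteH_rec']
      have hM : (0:ℝ) ≤ ‖z‖ := norm_nonneg _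
      set M := ‖z‖ with hMdef
      have hb : (1:ℝ) ≤ M + (n+1) := by push_cast; linarith
      calc ‖z * hermiteH (n+1) z - (n+1:ℂ) * hermiteH n z‖
          ≤ ‖z * hermiteH (n+1) z‖ + ‖(n+1:ℂ) * hermiteH n z‖ :=
            norm_sub_le _ _
        _ ≤ M * (M + (n+1))^(n+1) + (n+1) * (M + n)^n := by
            rw [norm_mul, norm_mul]
            have : ‖(n+1:ℂ)‖ = (n+1:ℝ) := by
              rw [show ((n+1:ℂ)) = ((n+1:ℝ):ℂ) by push_cast; ring, Complex.norm_real, Real.norm_eq_abs]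
              rw [abs_of_nonneg (by positivity)]
            rw [this]
            push_cast at h1 h0
            gcongr
        _ ≤ M * (M + (n+1))^(n+1) + (n+1) * (M + (n+1))^(n+1) := by
            gcongr
            · calc (M + (n:ℝ))^n ≤ (M + (n+1))^n := by gcongr <;> linarith
                _ ≤ (M + (n+1))^(n+1) := by
                    nth_rewrite 1 [← one_mul ((M + (n+1:ℝ))^n)]
                    rw [pow_succ']
                    gcongr
        _ = (M + (n+1)) * (M + (n+1))^(n+1) := by ring
        _ ≤ (M + (n+2)) * (M + (n+2))^(n+1) := by gcongr <;> push_cast <;> linarith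
        _ = (M + (n+2))^(n+2) := by rw [← pow_succ']
        _ = (M + ((n+2:ℕ):ℝ))^(n+2) := by push_cast; ring_nf

theorem one_add_ne' (H : ℝ) : (1 + (H:ℂ) * Complex.I) ≠ 0 := by
  intro h
  have := congrArg Complex.re h
  simp at this

theorem dC_sq' (H : ℝ) : dC H * dC H = 1 + H * Complex.I := by
  unfold dC
  rw [← Complex.cpow_add _ _ (one_add_ne' H)]
  norm_num

theorem abs_dC_le' (H : ℝ) : ‖dC H‖ ≤ Real.sqrt (1 + |H|) := by
  have h2 : (‖dC H‖)^2 = ‖1 + H * Complex.I‖ := by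
    rw [← dC_sq' H, norm_mul]; ring
  have habs : ‖1 + H * Complex.I‖ = Real.sqrt (1 + H^2) := by
    rw [Complex.norm_def, Complex.normSq_apply]
    norm_num
    ring_nf
  have hle : Real.sqrt (1 + H^2) ≤ 1 + |H| := by
    rw [show (1:ℝ) + |H| = Real.sqrt ((1+|H|)^2) by rw [Real.sqrt_sq (by positivity)]]
    apply Real.sqrt_le_sqrt
    nlinarith [abs_nonneg H, sq_abs H]
  have : (‖dC H‖)^2 ≤ 1 + |H| := by rw [h2, habs]; exact hle
  nlinarith [norm_nonneg (dC H), Real.sq_sqrt (show (0:ℝ) ≤ 1 + |H| by positivity),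
    Real.sqrt_nonneg (1 + |H|)]

theorem re_im_dC' (H : ℝ) : (dC H).re^2 - (dC H).im^2 = 1 ∧ 2 * (dC H).re * (dC H).im = H := by
  have := dC_sq' H
  have hre := congrArg Complex.re this
  have him := congrArg Complex.im this
  simp [Complex.mul_re, Complex.mul_im] at hre him
  constructor <;> nlinarith

theorem re_dC_pos' (H : ℝ) : 0 < (dC H).re := by
  have hz := one_add_ne' H
  have harg : |Complex.arg (1 + H * Complex.I)| < π / 2 := by
    rw [Complex.abs_arg_lt_pi_div_two_iff]
    left; simp
  unfold dC
  rw [Complex.cpow_def_of_ne_zero hz, Complex.exp_re]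
  have him : (Complex.log (1 + H * Complex.I) * ((1:ℂ)/2)).im
      = Complex.arg (1 + H * Complex.I) / 2 := by
    simp [Complex.mul_im, Complex.log_im]
    ring
  rw [him]
  have : Real.cos (Complex.arg (1 + H * Complex.I) / 2) > 0 := by
    apply Real.cos_pos_of_mem_Ioo
    have := abs_lt.mp harg
    constructor <;> linarith [this.1, this.2, Real.pi_pos]
  positivity

theorem im_dC_le' (H : ℝ) : |(dC H).im| ≤ |H| / 2 := by
  obtain ⟨h1, h2⟩ := re_im_dC' H
  have hre : 1 ≤ (dC H).re := by nlinarith [re_dC_pos' H, sq_nonneg ((dC H).im)]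
  have h3 : |H| = 2 * (dC H).re * |(dC H).im| := by
    conv_lhs => rw [← h2]
    rw [abs_mul, abs_of_nonneg (by linarith : (0:ℝ) ≤ 2 * (dC H).re)]
  nlinarith [abs_nonneg ((dC H).im)]

theorem pow_self_le' (N : ℕ) (h : 1 ≤ N) : (N:ℝ)^N ≤ (Nat.factorial (N-1)) * 6^N := by
  have h1 : (N:ℝ)^N / (Nat.factorial N) ≤ Real.exp N :=
    Real.pow_div_factorial_le_exp (x := (N:ℝ)) (by positivity) N
  have h2 : Real.exp (N:ℝ) ≤ 3^N := by
    rw [← Real.exp_one_rpow (N:ℝ)]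
    rw [Real.rpow_natCast]
    gcongr
    · linarith [Real.exp_one_lt_d9]
  have h3 : (Nat.factorial N : ℝ) = N * Nat.factorial (N-1) := by
    rw [show N = (N-1) + 1 by omega, Nat.factorial_succ]
    push_cast
    simp
  have hfacpos : (0:ℝ) < Nat.factorial N := by positivity
  have h4 : (N:ℝ)^N ≤ Nat.factorial N * 3^N := by
    rw [div_le_iff₀ hfacpos] at h1
    calc (N:ℝ)^N ≤ Real.exp N * Nat.factorial N := h1
      _ ≤ 3^N * Nat.factorial N := by gcongr
      _ = Nat.factorial N * 3^N := by ring
  have h5 : (N:ℝ) ≤ 2^N := by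
    exact_mod_cast Nat.lt_two_pow_self (n := N) |>.le
  calc (N:ℝ)^N ≤ Nat.factorial N * 3^N := h4
    _ = N * Nat.factorial (N-1) * 3^N := by rw [h3]
    _ ≤ 2^N * Nat.factorial (N-1) * 3^N := by gcongr ?_ * _ * _
    _ = Nat.factorial (N-1) * 6^N := by rw [show (6:ℝ) = 2*3 by norm_num, mul_pow]; ring

theorem fac_le' (k j : ℕ) : Nat.factorial (k + j) ≤ Nat.factorial k * (k+j)^j := by
  induction j with
  | zero => simp
  | succ j ih =>
    rw [show k + (j+1) = (k+j)+1 by omega, Nat.factorial_succ]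
    calc (k+j+1) * Nat.factorial (k+j) ≤ (k+j+1) * (Nat.factorial k * (k+j)^j) := by
          exact Nat.mul_le_mul_left _ ih
      _ ≤ Nat.factorial k * (k+j+1)^(j+1) := by
          rw [pow_succ]
          have : (k+j)^j ≤ (k+j+1)^j := Nat.pow_le_pow_left (by omega) j
          calc (k+j+1) * (Nat.factorial k * (k+j)^j)
              = Nat.factorial k * ((k+j)^j * (k+j+1)) := by ring
            _ ≤ Nat.factorial k * ((k+j+1)^j * (k+j+1)) := by
                exact Nat.mul_le_mul_left _ (Nat.mul_le_mul_right _ this)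

theorem term_le' (a : ℝ) (N k : ℕ) (hk : k < N) (ha : (N:ℝ) ≤ a) (ha0 : 0 ≤ a) :
    a^k / (Nat.factorial k) ≤ a^(N-1) / (Nat.factorial (N-1)) := by
  have h1 : 1 ≤ N := by omega
  set j := N - 1 - k with hj
  have hkj : N - 1 = k + j := by omega
  have hfac : (Nat.factorial (N-1) : ℝ) ≤ Nat.factorial k * (N:ℝ)^j := by
    rw [hkj]
    calc (Nat.factorial (k+j) : ℝ) ≤ (Nat.factorial k * (k+j)^j : ℕ) := by
          exact_mod_cast fac_le' k j
      _ = Nat.factorial k * ((k+j:ℕ):ℝ)^j := by push_cast; ring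
      _ ≤ Nat.factorial k * (N:ℝ)^j := by
          gcongr
          exact_mod_cast show k + j ≤ N by omega
  rw [div_le_div_iff₀ (by positivity) (by positivity)]
  calc a^k * Nat.factorial (N-1) ≤ a^k * (Nat.factorial k * a^j) := by
        have h6 : (Nat.factorial (N-1):ℝ) ≤ Nat.factorial k * a^j :=
          hfac.trans (by gcongr)
        gcongr
      _ = a^(k+j) * Nat.factorial k := by rw [pow_add]; ring
      _ = a^(N-1) * Nat.factorial k := by rw [hkj]

theorem sqrtN_eq' (N : ℕ) (h : 1 ≤ N) :
    ((N:ℂ)⁻¹) ^ (-(1:ℂ)/2) = ((Real.sqrt N : ℝ) : ℂ) := by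
  have hN : (0:ℝ) < N := by exact_mod_cast h
  have h1 : ((N:ℂ)⁻¹) = (((N:ℝ)⁻¹ : ℝ) : ℂ) := by push_cast; ring
  have h2 : (-(1:ℂ)/2) = (((-1/2 : ℝ)) : ℂ) := by norm_num
  rw [h1, h2, ← Complex.ofReal_cpow (by positivity)]
  congr 1
  rw [Real.inv_rpow (by positivity), show (-1/2 : ℝ) = -(1/2) by norm_num,
    Real.rpow_neg (by positivity), inv_inv, Real.sqrt_eq_rpow]

theorem phi_bound' (k : ℕ) (w : ℂ) (hw : 0 ≤ (w^2).re) :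
    ‖hermitePhi k w‖ ≤ (‖w‖ + k)^k / Real.sqrt (Nat.factorial k) := by
  have hfac : (0:ℝ) < Real.sqrt (Nat.factorial k) := by
    apply Real.sqrt_pos.mpr; exact_mod_cast Nat.factorial_pos k
  have hpi : (1:ℝ) ≤ (2*π) ^ ((1:ℝ)/4) :=
    Real.one_le_rpow (by linarith [Real.pi_gt_three]) (by norm_num)
  have hc : Real.sqrt (Nat.factorial k) ≤ (2*π) ^ ((1:ℝ)/4) * Real.sqrt (Nat.factorial k) := by
    nth_rewrite 1 [← one_mul (Real.sqrt (Nat.factorial k))]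
    gcongr
  have hexp : ‖Complex.exp (-(w^2)/4)‖ ≤ 1 := by
    rw [Complex.norm_exp]
    apply Real.exp_le_one_iff.mpr
    have hre : (-(w^2)/4).re = -((w^2).re)/4 := by
      simp [Complex.div_re]
    rw [hre]; linarith
  unfold hermitePhi hermiteP
  rw [norm_mul, norm_div, Complex.norm_real, Real.norm_eq_abs]
  have habs : |(2 * π) ^ ((1:ℝ)/4) * Real.sqrt (Nat.factorial k)|
      = (2 * π) ^ ((1:ℝ)/4) * Real.sqrt (Nat.factorial k) := abs_of_pos (by positivity)
  rw [habs]
  calc ‖hermiteH k w‖ / ((2*π)^((1:ℝ)/4) * Real.sqrt (Nat.factorial k))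
        * ‖Complex.exp (-(w^2)/4)‖
      ≤ (‖w‖ + k)^k / Real.sqrt (Nat.factorial k) * 1 := by
        apply mul_le_mul _ hexp (norm_nonneg _) (by positivity)
        apply div_le_div₀ (by positivity) (hermiteH_bound' k w) hfac hc
      _ = (‖w‖ + k)^k / Real.sqrt (Nat.factorial k) := by ring


theorem aux_sqrt_le' (x : ℝ) (h : 1 ≤ x) : Real.sqrt x ≤ x := by
  nlinarith [Real.sq_sqrt (show (0:ℝ) ≤ x by linarith), Real.sqrt_nonneg x,
    sq_nonneg (Real.sqrt x - 1)]

theorem aux_one_le_sqrt' (x : ℝ) (h : 0 ≤ x) : 1 ≤ Real.sqrt (1 + x) := by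
  nlinarith [Real.sq_sqrt (show (0:ℝ) ≤ 1 + x by linarith), Real.sqrt_nonneg (1 + x),
    sq_nonneg (Real.sqrt (1 + x) - 1)]

theorem aux_M0N' (A s sN Nr : ℝ) (hA : 0 < A) (hs : 1 ≤ s) (hsN : 0 < sN)
    (h1 : sN ≤ Nr) (hN : 1 ≤ Nr) : (A+2) * s * sN + Nr ≤ (A+3) * s * Nr := by
  have hAs : 0 ≤ (A+2)*s := by nlinarith
  have e1 := mul_le_mul_of_nonneg_left h1 hAs
  have e2 : Nr ≤ s*Nr := by nlinarith
  nlinarith [e1, e2]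

theorem aux_nsq' (m n : ℝ) (hm : 0 ≤ m) (hn : 1 ≤ n) : n ≤ (m+n)^2 := by nlinarith

theorem aux_key' (c' h₀ H : ℝ) (hc' : 0 < c') (hh₀ : 0 < h₀) (hH : h₀ ≤ |H|) :
    c' * (1 + |H|) ≤ (c' * (1 + 1/h₀) / h₀) * H^2 := by
  have ht : 0 < |H| := lt_of_lt_of_le hh₀ hH
  have hsq : H^2 = |H|^2 := (sq_abs H).symm
  rw [hsq]
  rw [div_mul_eq_mul_div, le_div_iff₀ hh₀]
  have e1 : h₀ * |H| ≤ |H|^2 := by nlinarith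
  have e2 : h₀^2 ≤ |H|^2 := by nlinarith
  have e3 : c' * (1 + 1/h₀) * |H|^2 = c' * |H|^2 + c' * |H|^2 / h₀ := by
    field_simp
  rw [e3]
  have e4 : c' * (1 + |H|) * h₀ = c' * h₀ + c' * h₀ * |H| := by ring
  rw [e4]
  have e5 : c' * h₀ ≤ c' * |H|^2 / h₀ := by
    rw [le_div_iff₀ hh₀]
    nlinarith
  have e6 : c' * h₀ * |H| ≤ c' * |H|^2 := by nlinarith
  linarith

theorem kernel_bound_far_scaled :
    ∀ δ : ℝ, 0 < δ → ∀ A : ℝ, 0 < A → ∃ R₃ : ℝ, 0 < R₃ ∧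
      ∀ N : ℕ, 1 ≤ N → ∀ u ∈ Set.Icc (-2:ℝ) 2,
        ∀ t₁ ∈ Set.Icc (-A) A, ∀ t₂ ∈ Set.Icc (-A) A, ∀ H : ℝ,
          δ ≤ |(((u + t₁ / N : ℝ) : ℂ) * dC H).im| →
          δ ≤ |(((u + t₂ / N : ℝ) : ℂ) * dC H).im| →
          ‖(N : ℂ)⁻¹ *
              kernelKt N (((u + t₁ / N : ℝ) : ℂ) * dC H)
                (((u + t₂ / N : ℝ) : ℂ) * dC H) ((N : ℂ)⁻¹)‖ ≤
            (Nat.factorial (N - 1)) * R₃ ^ (2 * N) * H ^ (2 * N) := by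
  intro δ hδ A hA
  set h₀ : ℝ := 2*δ/(A+2) with hh₀def
  have hh₀ : 0 < h₀ := by positivity
  set B : ℝ := A + 3 with hBdef
  have hB : 0 < B := by positivity
  set c' : ℝ := 36 * B^2 with hc'def
  have hc' : 0 < c' := by positivity
  refine ⟨Real.sqrt (c' * (1 + 1/h₀) / h₀), Real.sqrt_pos.mpr (by positivity), ?_⟩
  set R : ℝ := Real.sqrt (c' * (1 + 1/h₀) / h₀) with hRdef
  have hRsq : R^2 = c' * (1 + 1/h₀) / h₀ := Real.sq_sqrt (by positivity)
  intro N hN u hu t₁ ht₁ t₂ ht₂ H hIm1 hIm2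
  obtain ⟨hu1, hu2⟩ := hu
  obtain ⟨ht11, ht12⟩ := ht₁
  obtain ⟨ht21, ht22⟩ := ht₂
  have hN0 : (0:ℝ) < N := by exact_mod_cast hN
  have hN1 : (1:ℝ) ≤ N := by exact_mod_cast hN
  set x₁ : ℝ := u + t₁ / N with hx₁def
  set x₂ : ℝ := u + t₂ / N with hx₂def
  have hx₁ : |x₁| ≤ A + 2 := by
    rw [abs_le]
    have l1 : t₁ / N ≤ A := by rw [div_le_iff₀ hN0]; nlinarith
    have l2 : -A ≤ t₁ / N := by rw [le_div_iff₀ hN0]; nlinarith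
    constructor <;> [skip; skip] <;> simp only [hx₁def] <;> linarith
  have hx₂ : |x₂| ≤ A + 2 := by
    rw [abs_le]
    have l1 : t₂ / N ≤ A := by rw [div_le_iff₀ hN0]; nlinarith
    have l2 : -A ≤ t₂ / N := by rw [le_div_iff₀ hN0]; nlinarith
    constructor <;> [skip; skip] <;> simp only [hx₂def] <;> linarith
  -- lower bound on |H|
  have him1 : |(((x₁:ℝ):ℂ) * dC H).im| = |x₁| * |(dC H).im| := by
    rw [show (((x₁:ℝ):ℂ) * dC H).im = x₁ * (dC H).im by simp [Complex.mul_im], abs_mul]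
  have hH : h₀ ≤ |H| := by
    have h1 : δ ≤ |x₁| * |(dC H).im| := by rw [← him1]; exact hIm1
    have h2 : |x₁| * |(dC H).im| ≤ (A+2) * (|H|/2) :=
      mul_le_mul hx₁ (im_dC_le' H) (abs_nonneg _) (by linarith)
    rw [hh₀def, div_le_iff₀ (by linarith : (0:ℝ) < A + 2)]
    nlinarith [abs_nonneg H]
  have hHpos : 0 < |H| := lt_of_lt_of_le hh₀ hH
  -- rewrite the kernel
  set d : ℂ := dC H with hddef
  set sN : ℝ := Real.sqrt N with hsNdef
  have hsN0 : 0 < sN := Real.sqrt_pos.mpr hN0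
  have hsNle : sN ≤ (N:ℝ) := by rw [hsNdef]; exact aux_sqrt_le' _ hN1
  set w₁ : ℂ := ((x₁:ℝ):ℂ) * d * ((sN:ℝ):ℂ) with hw₁def
  set w₂ : ℂ := ((x₂:ℝ):ℂ) * d * ((sN:ℝ):ℂ) with hw₂def
  have hker : (N : ℂ)⁻¹ * kernelKt N (((x₁:ℝ):ℂ) * d) (((x₂:ℝ):ℂ) * d) ((N:ℂ)⁻¹)
      = (N : ℂ)⁻¹ * ((sN:ℝ):ℂ) * kernelK N w₁ w₂ := by
    unfold kernelKt
    rw [sqrtN_eq' N hN]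
    rw [hw₁def, hw₂def, hsNdef]; ring_nf
  -- square real parts
  have hsq : (((sN:ℝ):ℂ))^2 = ((N:ℝ):ℂ) := by
    rw [← Complex.ofReal_pow, Real.sq_sqrt (le_of_lt hN0)]
  have hw1sq : (w₁^2).re = x₁^2 * N := by
    have : w₁^2 = ((x₁^2 * N : ℝ):ℂ) * (1 + H * Complex.I) := by
      rw [show w₁^2 = ((x₁:ℝ):ℂ)^2 * (d * d) * (((sN:ℝ):ℂ))^2 by ring, hddef, dC_sq', hsq]
      push_cast
      ring
    rw [this, Complex.mul_re, Complex.ofReal_re, Complex.ofReal_im]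
    simp
  have hw2sq : (w₂^2).re = x₂^2 * N := by
    have : w₂^2 = ((x₂^2 * N : ℝ):ℂ) * (1 + H * Complex.I) := by
      rw [show w₂^2 = ((x₂:ℝ):ℂ)^2 * (d * d) * (((sN:ℝ):ℂ))^2 by ring, hddef, dC_sq', hsq]
      push_cast
      ring
    rw [this, Complex.mul_re, Complex.ofReal_re, Complex.ofReal_im]
    simp
  -- absolute values of the points
  set M₀ : ℝ := (A+2) * Real.sqrt (1 + |H|) * sN with hM₀def
  have hM₀0 : 0 ≤ M₀ := by positivity
  have habsw₁ : ‖w₁‖ ≤ M₀ := by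
    rw [hw₁def, norm_mul, norm_mul, Complex.norm_real, Real.norm_eq_abs, Complex.norm_real, Real.norm_eq_abs,
      abs_of_pos hsN0]
    rw [hM₀def]
    have := abs_dC_le' H
    gcongr
  have habsw₂ : ‖w₂‖ ≤ M₀ := by
    rw [hw₂def, norm_mul, norm_mul, Complex.norm_real, Real.norm_eq_abs, Complex.norm_real, Real.norm_eq_abs,
      abs_of_pos hsN0]
    rw [hM₀def]
    have := abs_dC_le' H
    gcongr
  set a : ℝ := (M₀ + N)^2 with hadef
  have ha0 : 0 ≤ a := sq_nonneg _
  have haN : (N:ℝ) ≤ a := by rw [hadef]; exact aux_nsq' _ _ hM₀0 hN1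
  -- per-term bound
  have hterm : ∀ k ∈ Finset.range N,
      ‖hermitePhi k w₁ * hermitePhi k w₂‖ ≤ a^(N-1) / (Nat.factorial (N-1)) := by
    intro k hk
    rw [Finset.mem_range] at hk
    have hkN : (k:ℝ) ≤ N := by exact_mod_cast hk.le
    have hb₁ := phi_bound' k w₁ (by rw [hw1sq]; positivity)
    have hb₂ := phi_bound' k w₂ (by rw [hw2sq]; positivity)
    have hfacpos : (0:ℝ) < Real.sqrt (Nat.factorial k) := by
      apply Real.sqrt_pos.mpr; exact_mod_cast Nat.factorial_pos k
    have step1 : ‖hermitePhi k w₁ * hermitePhi k w₂‖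
        ≤ ((‖w₁‖ + k)^k / Real.sqrt (Nat.factorial k))
          * ((‖w₂‖ + k)^k / Real.sqrt (Nat.factorial k)) := by
      rw [norm_mul]
      exact mul_le_mul hb₁ hb₂ (norm_nonneg _) (by positivity)
    have step2 : ((‖w₁‖ + k)^k / Real.sqrt (Nat.factorial k))
          * ((‖w₂‖ + k)^k / Real.sqrt (Nat.factorial k))
        = (‖w₁‖ + k)^k * (‖w₂‖ + k)^k / (Nat.factorial k) := by
      rw [div_mul_div_comm, Real.mul_self_sqrt (by positivity)]
    have step3 : (‖w₁‖ + k)^k * (‖w₂‖ + k)^k ≤ a^k := by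
      have e1 : (‖w₁‖ + k)^k ≤ (M₀ + N)^k := by
        gcongr
      have e2 : (‖w₂‖ + k)^k ≤ (M₀ + N)^k := by
        gcongr
      calc (‖w₁‖ + k)^k * (‖w₂‖ + k)^k
          ≤ (M₀ + N)^k * (M₀ + N)^k := by
            apply mul_le_mul e1 e2 (by positivity) (by positivity)
        _ = a^k := by rw [hadef, ← pow_add, ← pow_mul, Nat.two_mul]
    calc ‖hermitePhi k w₁ * hermitePhi k w₂‖
        ≤ (‖w₁‖ + k)^k * (‖w₂‖ + k)^k / (Nat.factorial k) := by
          rw [← step2]; exact step1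
      _ ≤ a^k / (Nat.factorial k) :=
          div_le_div₀ (by positivity) step3 (by exact_mod_cast Nat.factorial_pos k) le_rfl
      _ ≤ a^(N-1) / (Nat.factorial (N-1)) := term_le' a N k hk haN ha0
  -- sum bound
  have hsum : ‖kernelK N w₁ w₂‖ ≤ a^N / (Nat.factorial (N-1)) := by
    unfold kernelK
    calc ‖∑ k ∈ Finset.range N, hermitePhi k w₁ * hermitePhi k w₂‖
        ≤ ∑ k ∈ Finset.range N, ‖hermitePhi k w₁ * hermitePhi k w₂‖ :=
          norm_sum_le _ _
      _ ≤ ∑ _k ∈ Finset.range N, a^(N-1) / (Nat.factorial (N-1)) :=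
          Finset.sum_le_sum hterm
      _ = N * (a^(N-1) / (Nat.factorial (N-1))) := by
          rw [Finset.sum_const, Finset.card_range, nsmul_eq_mul]
      _ ≤ a^N / (Nat.factorial (N-1)) := by
          have hpow : a^N = a * a^(N-1) := by
            rw [← pow_succ', show (N-1)+1 = N by omega]
          rw [hpow]
          rw [mul_div_assoc]
          gcongr
  -- prefactor
  have hpre : ‖(N : ℂ)⁻¹ * ((sN:ℝ):ℂ)‖ ≤ 1 := by
    rw [norm_mul, norm_inv, Complex.norm_natCast, Complex.norm_real, Real.norm_eq_abs, abs_of_pos hsN0]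
    rw [inv_mul_le_iff₀ hN0, mul_one]
    exact hsNle
  -- bound on a
  have hsqrtH1 : (1:ℝ) ≤ Real.sqrt (1 + |H|) := aux_one_le_sqrt' _ (abs_nonneg H)
  have hM₀N : M₀ + N ≤ B * Real.sqrt (1 + |H|) * N := by
    rw [hM₀def, hBdef]
    exact aux_M0N' A _ sN N hA hsqrtH1 hsN0 hsNle hN1
  have ha_le : a ≤ B^2 * (1 + |H|) * (N:ℝ)^2 := by
    rw [hadef]
    calc (M₀ + N)^2 ≤ (B * Real.sqrt (1 + |H|) * N)^2 := by
          apply pow_le_pow_left₀ (by positivity) hM₀N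
      _ = B^2 * (Real.sqrt (1 + |H|))^2 * (N:ℝ)^2 := by ring
      _ = B^2 * (1 + |H|) * (N:ℝ)^2 := by
          rw [Real.sq_sqrt (by positivity)]
  -- final numeric chain
  have hNN : ((N:ℝ)^2)^N ≤ ((Nat.factorial (N-1) : ℝ))^2 * 36^N := by
    calc ((N:ℝ)^2)^N = ((N:ℝ)^N)^2 := by rw [← pow_mul, ← pow_mul, Nat.mul_comm]
      _ ≤ ((Nat.factorial (N-1) : ℝ) * 6^N)^2 := by
          apply pow_le_pow_left₀ (by positivity) (pow_self_le' N hN)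
      _ = ((Nat.factorial (N-1) : ℝ))^2 * 36^N := by
          rw [mul_pow, ← pow_mul, Nat.mul_comm N 2, pow_mul]
          norm_num
  have hfacN1 : (0:ℝ) < (Nat.factorial (N-1) : ℝ) := by
    exact_mod_cast Nat.factorial_pos (N-1)
  have haN_le : a^N / (Nat.factorial (N-1)) ≤ (Nat.factorial (N-1)) * (c' * (1 + |H|))^N := by
    rw [div_le_iff₀ hfacN1]
    calc a^N ≤ (B^2 * (1 + |H|) * (N:ℝ)^2)^N := by
          apply pow_le_pow_left₀ ha0 ha_le
      _ = (B^2 * (1 + |H|))^N * ((N:ℝ)^2)^N := by rw [← mul_pow]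
      _ ≤ (B^2 * (1 + |H|))^N * (((Nat.factorial (N-1) : ℝ))^2 * 36^N) := by
          gcongr
      _ = ((B^2 * (1 + |H|)) * 36)^N * ((Nat.factorial (N-1) : ℝ))^2 := by
          rw [mul_pow (B^2 * (1 + |H|)) 36 N]
          ring
      _ = (c' * (1 + |H|))^N * ((Nat.factorial (N-1) : ℝ))^2 := by
          congr 2
          rw [hc'def]
          ring
      _ = (Nat.factorial (N-1)) * (c' * (1 + |H|))^N * (Nat.factorial (N-1)) := by ring
  have hfinal : (c' * (1 + |H|))^N ≤ R^(2*N) * H^(2*N) := by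
    have key : c' * (1 + |H|) ≤ R^2 * H^2 := by
      rw [hRsq]
      exact aux_key' c' h₀ H hc' hh₀ hH
    calc (c' * (1 + |H|))^N ≤ (R^2 * H^2)^N := by
          apply pow_le_pow_left₀ (by positivity) key
      _ = R^(2*N) * H^(2*N) := by rw [mul_pow, ← pow_mul, ← pow_mul]
  -- assemble
  rw [hker, norm_mul]
  calc ‖(N:ℂ)⁻¹ * ((sN:ℝ):ℂ)‖ * ‖kernelK N w₁ w₂‖
      ≤ 1 * (a^N / (Nat.factorial (N-1))) :=
        mul_le_mul hpre hsum (norm_nonneg _) zero_le_one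
    _ = a^N / (Nat.factorial (N-1)) := one_mul _
    _ ≤ (Nat.factorial (N-1)) * (c' * (1 + |H|))^N := haN_le
    _ ≤ (Nat.factorial (N-1)) * (R^(2*N) * H^(2*N)) := by
        gcongr
    _ = (Nat.factorial (N-1)) * R^(2*N) * H^(2*N) := by ring

end
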